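/- Let F̄, F̃, F̊ be invertible n×n real matrices, F = F̄ F̃⁻¹ F̊, B̊ = F̊ F̊ᵀ, B = F̄ F̃⁻¹ B̊ F̃⁻ᵀ F̄ᵀ, E = ½ (Fᵀ F − I), J̄ = det F̄, J̃ = det F̃, J̊ = det F̊, J = det F, and let λ, μ, α, θ, θ₀ be real scalars. Suppose P, σ are n×n real matrices satisfying P F̄ᵀ = J̄ σ and J σ = F Ŝ Fᵀ, where Ŝ = λ (tr E) I + 2μ E − α(θ − θ₀) I. Then P = J̃ J̊⁻¹ · ( (λ/2) tr(B − I) · I + μ (B − I) − α(θ − θ₀) · I ) · F̄ F̃⁻¹ B̊ F̃⁻ᵀ. -/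

import Mathlib

/-!
Writing `B = F Fᵀ` (which is what the definitions of `F`, `B̊` and `B` give), the push-forward of the
St. Venant–Kirchhoff stress is `F Ŝ Fᵀ = ((λ/2) tr(B − I) I + μ (B − I) − α(θ − θ₀) I) B`, because
`F (FᵀF − I) Fᵀ = (B − I) B` and `tr(FᵀF) = tr B`. Solving the two stress relations for `P` gives
`P = J̄ J⁻¹ F Ŝ Fᵀ F̄⁻ᵀ`, where `J̄ J⁻¹ = J̃ J̊⁻¹` by multiplicativity of the determinant and
`B F̄⁻ᵀ = F̄ F̃⁻¹ B̊ F̃⁻ᵀ`.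
-/

open Matrix

namespace Matrix

variable {m K : Type*} [Fintype m] [DecidableEq m] [Field K]

theorem det_mul_nonsing_inv_mul (A C D : Matrix m m K) :
    (A * C⁻¹ * D).det = A.det * C.det⁻¹ * D.det := by
  rw [det_mul, det_mul, det_nonsing_inv, Ring.inverse_eq_inv']

theorem trace_half_smul_transpose_mul_self_sub_one (F : Matrix m m K) :
    ((1 / 2 : K) • (Fᵀ * F - 1)).trace = 1 / 2 * (F * Fᵀ - 1).trace := by
  rw [trace_smul, trace_sub, trace_sub, trace_mul_comm, smul_eq_mul]

theorem mul_transpose_mul_self_sub_one_mul_transpose (F : Matrix m m K) :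
    F * (Fᵀ * F - 1) * Fᵀ = (F * Fᵀ - 1) * (F * Fᵀ) := by
  simp only [Matrix.mul_sub, Matrix.sub_mul, Matrix.mul_one, Matrix.one_mul, Matrix.mul_assoc]

/-- Here `c` is the thermal term `α(θ − θ₀)`. -/
theorem mul_stVenantKirchhoff_mul_transpose [NeZero (2 : K)] (F : Matrix m m K) (lam μ c : K) :
    F * ((lam * ((1 / 2 : K) • (Fᵀ * F - 1)).trace) • (1 : Matrix m m K)
        + (2 * μ) • ((1 / 2 : K) • (Fᵀ * F - 1)) - c • (1 : Matrix m m K)) * Fᵀ =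
      ((lam / 2 * (F * Fᵀ - 1).trace) • (1 : Matrix m m K) + μ • (F * Fᵀ - 1)
        - c • (1 : Matrix m m K)) * (F * Fᵀ) := by
  rw [trace_half_smul_transpose_mul_self_sub_one, smul_smul (2 * μ),
    show 2 * μ * (1 / 2 : K) = μ by field_simp, Matrix.mul_sub, Matrix.mul_add, Matrix.sub_mul,
    Matrix.add_mul, Matrix.mul_smul, Matrix.smul_mul, Matrix.mul_smul, Matrix.smul_mul,
    mul_transpose_mul_self_sub_one_mul_transpose]
  simp only [Matrix.mul_smul, Matrix.smul_mul, Matrix.mul_one, Matrix.one_mul, Matrix.sub_mul,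
    Matrix.add_mul]
  module

theorem eq_smul_mul_mul_transpose_nonsing_inv {A P σ X : Matrix m m K} {a J : K}
    (hA : IsUnit A.det) (hJ : J ≠ 0) (hP : P * Aᵀ = a • σ) (hσ : J • σ = X) :
    P = (a * J⁻¹) • X * Aᵀ⁻¹ := by
  have hAT : IsUnit Aᵀ.det := by rwa [det_transpose]
  rw [← hσ, smul_smul, mul_assoc, inv_mul_cancel₀ hJ, mul_one, ← hP,
    mul_nonsing_inv_cancel_right _ _ hAT]

end Matrix

/-- Full reformulated thermoelastic St. Venant–Kirchhoff
constitutive law: with `P Fbarᵀ = Jbar σ`, `J σ = F Shat Fᵀ`, and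
`Shat = λ (tr E) I + 2μ E − α(θ − θ₀) I`, one has
`P = Jtil Jring⁻¹ ((λ/2) tr(B − I) I + μ (B − I) − α(θ − θ₀) I) Fbar Ftil⁻¹ Bring Ftil⁻ᵀ`. -/
theorem st_venant_kirchhoff_first_piola_kirchhoff
    {n : ℕ} (Fbar Ftil Fring : Matrix (Fin n) (Fin n) ℝ)
    (hFbar : IsUnit Fbar.det) (hFtil : IsUnit Ftil.det) (hFring : IsUnit Fring.det)
    (F Bring B E : Matrix (Fin n) (Fin n) ℝ)
    (hF : F = Fbar * Ftil⁻¹ * Fring) (hBring : Bring = Fring * Fringᵀ)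
    (hB : B = Fbar * Ftil⁻¹ * Bring * Ftil⁻¹ᵀ * Fbarᵀ)
    (hE : E = (1 / 2 : ℝ) • (Fᵀ * F - 1))
    (Jbar Jtil Jring J : ℝ)
    (hJbar : Jbar = Fbar.det) (hJtil : Jtil = Ftil.det) (hJring : Jring = Fring.det) (hJ : J = F.det)
    (lam μ α θ θ₀ : ℝ) (P σ Shat : Matrix (Fin n) (Fin n) ℝ)
    (hShat : Shat = (lam * E.trace) • (1 : Matrix (Fin n) (Fin n) ℝ)
      + (2 * μ) • E - (α * (θ - θ₀)) • (1 : Matrix (Fin n) (Fin n) ℝ))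
    (hP : P * Fbarᵀ = Jbar • σ) (hσ : J • σ = F * Shat * Fᵀ) :
    P = (Jtil * Jring⁻¹) •
        (((lam / 2 * (B - 1).trace) • (1 : Matrix (Fin n) (Fin n) ℝ)
            + μ • (B - 1)
            - (α * (θ - θ₀)) • (1 : Matrix (Fin n) (Fin n) ℝ))
          * (Fbar * Ftil⁻¹ * Bring * Ftil⁻¹ᵀ)) := by
  have hBF : B = F * Fᵀ := by
    rw [hB, hBring, hF]
    simp only [transpose_mul, Matrix.mul_assoc]
  have hJ' : J = Jbar * Jtil⁻¹ * Jring := by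
    rw [hJ, hF, det_mul_nonsing_inv_mul, hJbar, hJtil, hJring]
  have hJbar0 : Jbar ≠ 0 := hJbar ▸ hFbar.ne_zero
  have hJ0 : J ≠ 0 := by
    rw [hJ']
    exact mul_ne_zero (mul_ne_zero hJbar0 (inv_ne_zero (hJtil ▸ hFtil.ne_zero)))
      (hJring ▸ hFring.ne_zero)
  have hratio : Jbar * J⁻¹ = Jtil * Jring⁻¹ := by
    rw [hJ']
    field_simp
  have hBFbar : B * Fbarᵀ⁻¹ = Fbar * Ftil⁻¹ * Bring * Ftil⁻¹ᵀ := by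
    rw [hB, mul_nonsing_inv_cancel_right _ _ (by rwa [det_transpose])]
  rw [eq_smul_mul_mul_transpose_nonsing_inv hFbar hJ0 hP hσ, hratio, hShat, hE,
    mul_stVenantKirchhoff_mul_transpose, ← hBF, Matrix.smul_mul, Matrix.mul_assoc, hBFbar]
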